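/- In the polynomial ring ℝ[m,u,v], every common divisor of f(m,u,v) and g(m,u,v) is a unit; that is, f and g have no non-constant greatest common divisor. -/

import Mathlib

/-!
The ideal `(f, g)` of `ℝ[m,u,v]` contains, for each of the three variables, a nonzero polynomial
not involving it: explicit combinations `p f + q g` eliminate `u`, `v` and `m` respectively.
In a domain a divisor of a nonzero polynomial involves only variables of that polynomial, so a
common divisor of `f` and `g` involves no variable at all: it is a nonzero constant.
-/

open MvPolynomial

/-- `f(m,u,v)` as an element of `ℝ[m,u,v]` (variable `0` is `m`, `1` is `u`, `2` is `v`). -/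
noncomputable def fMv : MvPolynomial (Fin 3) ℝ :=
  (2 * X 0 - 2 * X 2) * X 1 ^ 2
    + (3 * X 0 ^ 2 - 7 * X 0 * X 2 - 2 * X 2 ^ 2) * X 1
    + (X 0 ^ 3 + 3 * X 0 ^ 2 * X 2 + 2 * X 0 * X 2 ^ 2)

/-- `g(m,u,v)` as an element of `ℝ[m,u,v]` (variable `0` is `m`, `1` is `u`, `2` is `v`):
`g = (7mu − 3m² − 4mv + 2u² + 4uv)(m + 2v)(m + v)
  + (4mu + 2uv)(3m² − 7mv + 4mu − 2v² − 4uv)`. -/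
noncomputable def gMv : MvPolynomial (Fin 3) ℝ :=
  (7 * X 0 * X 1 - 3 * X 0 ^ 2 - 4 * X 0 * X 2 + 2 * X 1 ^ 2 + 4 * X 1 * X 2)
      * (X 0 + 2 * X 2) * (X 0 + X 2)
    + (4 * X 0 * X 1 + 2 * X 1 * X 2)
      * (3 * X 0 ^ 2 - 7 * X 0 * X 2 + 4 * X 0 * X 1 - 2 * X 2 ^ 2 - 4 * X 1 * X 2)

namespace MvPolynomial

variable {σ τ R : Type*}

theorem vars_subset_of_dvd [CommSemiring R] [NoZeroDivisors R] {p q : MvPolynomial σ R}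
    (h : p ∣ q) (hq : q ≠ 0) : p.vars ⊆ q.vars := by
  classical
  obtain ⟨r, rfl⟩ := h
  rw [vars_def, vars_def, degrees_mul_eq (left_ne_zero_of_mul hq) (right_ne_zero_of_mul hq),
    Multiset.toFinset_add]
  exact Finset.subset_union_left

theorem notMem_vars_rename [CommSemiring R] {f : σ → τ} {i : τ} (hi : ∀ j, f j ≠ i)
    (φ : MvPolynomial σ R) : i ∉ (rename f φ).vars := fun h ↦
  let ⟨j, _, hj⟩ := mem_vars_rename f φ h
  hi j hj

theorem isUnit_of_vars_eq_empty {K : Type*} [Field K] {p : MvPolynomial σ K} (hp : p ≠ 0)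
    (h : p.vars = ∅) : IsUnit p := by
  rw [vars_eq_empty_iff_eq_C] at h
  rw [h] at hp ⊢
  exact (isUnit_iff_ne_zero.mpr fun h0 ↦ hp (by rw [h0, C_0])).map C

theorem isRelPrime_of_forall_exists_mem_span_notMem_vars {K : Type*} [Field K] [Nonempty σ]
    {p q : MvPolynomial σ K}
    (h : ∀ i, ∃ r ∈ Ideal.span {p, q}, r ≠ 0 ∧ i ∉ r.vars) : IsRelPrime p q := by
  intro d hp hq
  have dvd_of_mem {r : MvPolynomial σ K} (hr : r ∈ Ideal.span {p, q}) : d ∣ r := by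
    obtain ⟨a, b, rfl⟩ := Ideal.mem_span_pair.mp hr
    exact dvd_add (hp.mul_left a) (hq.mul_left b)
  obtain ⟨r, hr, hr0, -⟩ := h (Classical.arbitrary σ)
  refine isUnit_of_vars_eq_empty (ne_zero_of_dvd_ne_zero hr0 (dvd_of_mem hr)) ?_
  refine Finset.eq_empty_of_forall_notMem fun i hi ↦ ?_
  obtain ⟨r, hr, hr0, hir⟩ := h i
  exact hir (vars_subset_of_dvd (dvd_of_mem hr) hr0 hi)

end MvPolynomial

noncomputable def pU : MvPolynomial (Fin 3) ℝ :=
  32 * X 0 ^ 7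
    - 72 * X 0 ^ 6 * X 1
    + 775 * X 0 ^ 6 * X 2
    + 458 * X 0 ^ 5 * X 1 * X 2
    + 332 * X 0 ^ 5 * X 2 ^ 2
    + 128 * X 0 ^ 4 * X 1 * X 2 ^ 2
    - 293 * X 0 ^ 4 * X 2 ^ 3
    - 262 * X 0 ^ 3 * X 1 * X 2 ^ 3
    - 90 * X 0 ^ 3 * X 2 ^ 4
    - 92 * X 0 ^ 2 * X 1 * X 2 ^ 4
    + 40 * X 0 ^ 2 * X 2 ^ 5
    + 40 * X 0 * X 1 * X 2 ^ 5
    - 24 * X 0 * X 2 ^ 6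
    + 16 * X 1 * X 2 ^ 6
    - 16 * X 2 ^ 7

noncomputable def qU : MvPolynomial (Fin 3) ℝ :=
  8 * X 0 ^ 5 * X 1
    - 127 * X 0 ^ 5 * X 2
    - 58 * X 0 ^ 4 * X 1 * X 2
    + 158 * X 0 ^ 4 * X 2 ^ 2
    + 32 * X 0 ^ 3 * X 1 * X 2 ^ 2
    + 173 * X 0 ^ 3 * X 2 ^ 3
    + 34 * X 0 ^ 2 * X 1 * X 2 ^ 3
    - 32 * X 0 ^ 2 * X 2 ^ 4
    - 8 * X 0 * X 1 * X 2 ^ 4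
    - 56 * X 0 * X 2 ^ 5
    - 8 * X 1 * X 2 ^ 5
    - 8 * X 2 ^ 6

noncomputable def elimU : MvPolynomial (Fin 2) ℝ :=
  32 * X 0 ^ 10
    + 1252 * X 0 ^ 9 * X 1
    + 3898 * X 0 ^ 8 * X 1 ^ 2
    + 1966 * X 0 ^ 7 * X 1 ^ 3
    - 4286 * X 0 ^ 6 * X 1 ^ 4
    - 4610 * X 0 ^ 5 * X 1 ^ 5
    - 140 * X 0 ^ 4 * X 1 ^ 6
    + 1360 * X 0 ^ 3 * X 1 ^ 7
    + 496 * X 0 ^ 2 * X 1 ^ 8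
    + 32 * X 0 * X 1 ^ 9

theorem rename_elimU_ne_zero : (rename ![0, 2] elimU : MvPolynomial (Fin 3) ℝ) ≠ 0 := by
  intro h
  have := congrArg (eval (![-3, 0, -2] : Fin 3 → ℝ)) h
  norm_num [elimU, eval_rename, Matrix.cons_val_two] at this

theorem rename_elimU_mem_span : rename ![0, 2] elimU ∈ Ideal.span {fMv, gMv} := by
  refine Ideal.mem_span_pair.mpr ⟨pU, qU, ?_⟩
  unfold fMv gMv pU qU elimU
  simp only [map_add, map_sub, map_mul, map_pow, map_ofNat, rename_X,
    Matrix.cons_val_zero, Matrix.cons_val_one]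
  ring

noncomputable def pV : MvPolynomial (Fin 3) ℝ :=
  -24 * X 0 ^ 7 * X 1
    + 971 * X 0 ^ 6 * X 1 ^ 2
    - 128 * X 0 ^ 6 * X 1 * X 2
    + 130 * X 0 ^ 5 * X 1 ^ 3
    + 658 * X 0 ^ 5 * X 1 ^ 2 * X 2
    - 128 * X 0 ^ 5 * X 1 * X 2 ^ 2
    - 477 * X 0 ^ 4 * X 1 ^ 4
    + 30 * X 0 ^ 4 * X 1 ^ 3 * X 2
    + 360 * X 0 ^ 4 * X 1 ^ 2 * X 2 ^ 2
    - 20 * X 0 ^ 3 * X 1 ^ 5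
    - 120 * X 0 ^ 3 * X 1 ^ 4 * X 2
    - 28 * X 0 ^ 3 * X 1 ^ 3 * X 2 ^ 2
    + 56 * X 0 ^ 2 * X 1 ^ 6
    - 4 * X 0 ^ 2 * X 1 ^ 5 * X 2
    - 172 * X 0 ^ 2 * X 1 ^ 4 * X 2 ^ 2
    - 24 * X 0 * X 1 ^ 7
    - 24 * X 0 * X 1 ^ 6 * X 2
    + 24 * X 0 * X 1 ^ 5 * X 2 ^ 2
    - 16 * X 1 ^ 7 * X 2
    + 16 * X 1 ^ 6 * X 2 ^ 2

noncomputable def qV : MvPolynomial (Fin 3) ℝ :=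
  -8 * X 0 ^ 6 * X 1
    + 185 * X 0 ^ 5 * X 1 ^ 2
    - 32 * X 0 ^ 5 * X 1 * X 2
    - 190 * X 0 ^ 4 * X 1 ^ 3
    + 106 * X 0 ^ 4 * X 1 ^ 2 * X 2
    - 207 * X 0 ^ 3 * X 1 ^ 4
    - 44 * X 0 ^ 3 * X 1 ^ 3 * X 2
    + 40 * X 0 ^ 2 * X 1 ^ 5
    - 58 * X 0 ^ 2 * X 1 ^ 4 * X 2
    + 64 * X 0 * X 1 ^ 6
    + 20 * X 0 * X 1 ^ 5 * X 2
    + 8 * X 1 ^ 7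
    + 8 * X 1 ^ 6 * X 2

noncomputable def elimV : MvPolynomial (Fin 2) ℝ :=
  192 * X 0 ^ 9 * X 1 ^ 2
    + 6936 * X 0 ^ 8 * X 1 ^ 3
    + 2196 * X 0 ^ 7 * X 1 ^ 4
    - 8664 * X 0 ^ 6 * X 1 ^ 5
    - 4116 * X 0 ^ 5 * X 1 ^ 6
    + 2016 * X 0 ^ 4 * X 1 ^ 7
    + 1344 * X 0 ^ 3 * X 1 ^ 8
    + 96 * X 0 ^ 2 * X 1 ^ 9

theorem rename_elimV_ne_zero : (rename ![0, 1] elimV : MvPolynomial (Fin 3) ℝ) ≠ 0 := by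
  intro h
  have := congrArg (eval (![-3, -2, 0] : Fin 3 → ℝ)) h
  norm_num [elimV, eval_rename, Matrix.cons_val_two] at this

theorem rename_elimV_mem_span : rename ![0, 1] elimV ∈ Ideal.span {fMv, gMv} := by
  refine Ideal.mem_span_pair.mpr ⟨pV, qV, ?_⟩
  unfold fMv gMv pV qV elimV
  simp only [map_add, map_sub, map_mul, map_pow, map_ofNat, rename_X,
    Matrix.cons_val_zero, Matrix.cons_val_one]
  ring

set_option maxHeartbeats 400000 in
noncomputable def pM : MvPolynomial (Fin 3) ℝ :=
  96 * X 0 ^ 3 * X 1 ^ 6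
    - 4542 * X 0 ^ 3 * X 1 ^ 5 * X 2
    + 22923 * X 0 ^ 3 * X 1 ^ 4 * X 2 ^ 2
    - 19077 * X 0 ^ 3 * X 1 ^ 3 * X 2 ^ 3
    + 6 * X 0 ^ 3 * X 1 ^ 2 * X 2 ^ 4
    - 608 * X 0 ^ 2 * X 1 ^ 7
    + 29278 * X 0 ^ 2 * X 1 ^ 6 * X 2
    - 169673 * X 0 ^ 2 * X 1 ^ 5 * X 2 ^ 2
    + 219992 * X 0 ^ 2 * X 1 ^ 4 * X 2 ^ 3
    - 78697 * X 0 ^ 2 * X 1 ^ 3 * X 2 ^ 4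
    + 302 * X 0 ^ 2 * X 1 ^ 2 * X 2 ^ 5
    - 576 * X 0 * X 1 ^ 8
    + 26548 * X 0 * X 1 ^ 7 * X 2
    - 100892 * X 0 * X 1 ^ 6 * X 2 ^ 2
    + 45859 * X 0 * X 1 ^ 5 * X 2 ^ 3
    + 130331 * X 0 * X 1 ^ 4 * X 2 ^ 4
    - 101050 * X 0 * X 1 ^ 3 * X 2 ^ 5
    + 968 * X 0 * X 1 ^ 2 * X 2 ^ 6
    - 512 * X 1 ^ 8 * X 2
    + 21088 * X 1 ^ 7 * X 2 ^ 2
    + 18964 * X 1 ^ 6 * X 2 ^ 3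
    - 96610 * X 1 ^ 5 * X 2 ^ 4
    + 89954 * X 1 ^ 4 * X 2 ^ 5
    - 33652 * X 1 ^ 3 * X 2 ^ 6
    + 768 * X 1 ^ 2 * X 2 ^ 7

noncomputable def qM : MvPolynomial (Fin 3) ℝ :=
  32 * X 0 ^ 2 * X 1 ^ 6
    - 1514 * X 0 ^ 2 * X 1 ^ 5 * X 2
    + 7641 * X 0 ^ 2 * X 1 ^ 4 * X 2 ^ 2
    - 6359 * X 0 ^ 2 * X 1 ^ 3 * X 2 ^ 3
    + 2 * X 0 ^ 2 * X 1 ^ 2 * X 2 ^ 4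
    + 96 * X 0 * X 1 ^ 7
    - 4414 * X 0 * X 1 ^ 6 * X 2
    + 16777 * X 0 * X 1 ^ 5 * X 2 ^ 2
    + 3792 * X 0 * X 1 ^ 4 * X 2 ^ 3
    - 17735 * X 0 * X 1 ^ 3 * X 2 ^ 4
    + 98 * X 0 * X 1 ^ 2 * X 2 ^ 5
    + 64 * X 1 ^ 8
    - 3156 * X 1 ^ 7 * X 2
    + 21440 * X 1 ^ 6 * X 2 ^ 2
    - 73741 * X 1 ^ 5 * X 2 ^ 3
    + 63591 * X 1 ^ 4 * X 2 ^ 4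
    - 9182 * X 1 ^ 3 * X 2 ^ 5
    + 192 * X 1 ^ 2 * X 2 ^ 6

noncomputable def elimM : MvPolynomial (Fin 2) ℝ :=
  768 * X 0 ^ 10 * X 1 ^ 2
    - 28272 * X 0 ^ 9 * X 1 ^ 3
    - 178488 * X 0 ^ 8 * X 1 ^ 4
    + 536016 * X 0 ^ 7 * X 1 ^ 5
    - 536016 * X 0 ^ 6 * X 1 ^ 6
    + 178488 * X 0 ^ 5 * X 1 ^ 7
    + 28272 * X 0 ^ 4 * X 1 ^ 8
    - 768 * X 0 ^ 3 * X 1 ^ 9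

theorem rename_elimM_ne_zero : (rename ![1, 2] elimM : MvPolynomial (Fin 3) ℝ) ≠ 0 := by
  intro h
  have := congrArg (eval (![0, -3, -2] : Fin 3 → ℝ)) h
  norm_num [elimM, eval_rename, Matrix.cons_val_two] at this

theorem rename_elimM_mem_span : rename ![1, 2] elimM ∈ Ideal.span {fMv, gMv} := by
  refine Ideal.mem_span_pair.mpr ⟨pM, qM, ?_⟩
  unfold fMv gMv pM qM elimM
  simp only [map_add, map_sub, map_mul, map_pow, map_ofNat, rename_X,
    Matrix.cons_val_zero, Matrix.cons_val_one]
  ring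

/-- In `ℝ[m,u,v]`, every common divisor of `f` and `g` is a unit:
`f` and `g` have no non-constant greatest common divisor. -/
theorem f_g_no_common_factor :
    ∀ d : MvPolynomial (Fin 3) ℝ, d ∣ fMv → d ∣ gMv → IsUnit d := by
  refine isRelPrime_of_forall_exists_mem_span_notMem_vars fun i ↦ ?_
  fin_cases i
  · exact ⟨_, rename_elimM_mem_span, rename_elimM_ne_zero,
      notMem_vars_rename (by decide) _⟩
  · exact ⟨_, rename_elimU_mem_span, rename_elimU_ne_zero,
      notMem_vars_rename (by decide) _⟩
  · exact ⟨_, rename_elimV_mem_span, rename_elimV_ne_zero,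
      notMem_vars_rename (by decide) _⟩
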